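/- arXiv:1902.09830 — 5 statements merged into one kernel-verified Lean document; each statement's English description precedes it below -/
import Mathlib

section
/- Let B be a variety of codimension r in G_1 × ⋯ × G_k (i.e. B = {x : β(x) = λ} for some multiaffine map β : G_1 × ⋯ × G_k → 𝔽^r and λ ∈ 𝔽^r), and let x ∈ B. Then there are at least |𝔽|^{−kr}·|G_1 × ⋯ × G_k| points of B at distance at most k from x in the induced Hamming graph on B. In particular, if B is nonempty then |B| ≥ |𝔽|^{−kr}·|G_1 × ⋯ × G_k|. -/
/-- A map `f : G 0 × ⋯ × G (k-1) → H` between `𝔽`-vector spaces is *multiaffine*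
if it is affine in each coordinate separately. -/
def IsMultiaffine (𝔽 : Type*) [Field 𝔽] {ι : Type*} [DecidableEq ι] {G : ι → Type*}
    [∀ i, AddCommGroup (G i)] [∀ i, Module 𝔽 (G i)]
    {H : Type*} [AddCommGroup H] [Module 𝔽 H] (f : (∀ i, G i) → H) : Prop :=
  ∀ (i : ι) (x : ∀ j, G j), ∃ (g : G i →ₗ[𝔽] H) (h : H),
    ∀ y : G i, f (Function.update x i y) = g y + h

/-- The Hamming graph on `G 0 × ⋯ × G (k-1)`: two points are adjacent if they differ
in exactly one coordinate. -/
def hammingGraph {ι : Type*} [DecidableEq ι] (G : ι → Type*) :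
    SimpleGraph (∀ i, G i) where
  Adj x y := x ≠ y ∧ ∃ i, ∀ j, j ≠ i → x j = y j
  symm := by
    constructor
    rintro x y ⟨hxy, i, h⟩
    exact ⟨hxy.symm, i, fun j hj => (h j hj).symm⟩
  loopless := by constructor; rintro x ⟨h, -⟩; exact h rfl

lemma affine_fiber_card {𝔽 : Type} [Field 𝔽] [Fintype 𝔽] {M : Type} [AddCommGroup M]
    [Module 𝔽 M] [Fintype M] {r : ℕ} (g : M →ₗ[𝔽] (Fin r → 𝔽)) (v : Fin r → 𝔽)
    (c₀ : M) (hc : g c₀ = v) :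
    Fintype.card M ≤ Fintype.card 𝔽 ^ r * Nat.card {c : M // g c = v} := by
  have e : LinearMap.ker g ≃ {c : M // g c = v} :=
    { toFun := fun w => ⟨c₀ + w.1, by
        have h2 : g w.1 = 0 := w.2
        simp [h2, hc]⟩
      invFun := fun c => ⟨c.1 - c₀, by
        simp only [LinearMap.mem_ker, map_sub, c.2, hc, sub_self]⟩
      left_inv := fun w => by simp
      right_inv := fun c => by simp }
  have h1 : Nat.card M = Nat.card (LinearMap.ker g) * Nat.card (M ⧸ LinearMap.ker g) :=
    Submodule.card_eq_card_quotient_mul_card _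
  have h2 : Nat.card (M ⧸ LinearMap.ker g) = Nat.card (LinearMap.range g) :=
    Nat.card_congr g.quotKerEquivRange.toEquiv
  have h3 : Nat.card (LinearMap.range g) ≤ Fintype.card 𝔽 ^ r := by
    have := Nat.card_le_card_of_injective (Subtype.val : LinearMap.range g → (Fin r → 𝔽))
      Subtype.val_injective
    simpa [Nat.card_eq_fintype_card, Fintype.card_fun] using this
  have h4 : Nat.card (LinearMap.ker g) = Nat.card {c : M // g c = v} := Nat.card_congr e
  calc Fintype.card M = Nat.card M := (Nat.card_eq_fintype_card).symm
    _ = Nat.card (LinearMap.ker g) * Nat.card (M ⧸ LinearMap.ker g) := h1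
    _ ≤ Nat.card (LinearMap.ker g) * (Fintype.card 𝔽 ^ r) := by
        exact Nat.mul_le_mul_left _ (h2 ▸ h3)
    _ = Fintype.card 𝔽 ^ r * Nat.card {c : M // g c = v} := by rw [h4, mul_comm]

/-- The `m`-th hybrid of `x` and `y`: take `y` on the first `m` coordinates, `x` elsewhere. -/
def hyb {k : ℕ} {G : Fin k → Type} (x y : ∀ i, G i) (m : ℕ) : ∀ i, G i :=
  fun i => if (i : ℕ) < m then y i else x i

/-- Points agreeing with `x` from coordinate `m` on, all of whose hybrids lie in the variety. -/
def Tset {k : ℕ} {𝔽 : Type} [Field 𝔽] {G : Fin k → Type} {r : ℕ}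
    (β : (∀ i, G i) → (Fin r → 𝔽)) (lam : Fin r → 𝔽) (x : ∀ i, G i) (m : ℕ) :
    Set (∀ i, G i) :=
  {y | (∀ i : Fin k, m ≤ (i : ℕ) → y i = x i) ∧ ∀ j ≤ m, β (hyb x y j) = lam}

lemma step_count {k : ℕ} (𝔽 : Type) [Field 𝔽] [Fintype 𝔽]
    (G : Fin k → Type) [∀ i, AddCommGroup (G i)] [∀ i, Module 𝔽 (G i)]
    [∀ i, Fintype (G i)]
    (r : ℕ) (β : (∀ i, G i) → (Fin r → 𝔽)) (hβ : IsMultiaffine 𝔽 β)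
    (lam : Fin r → 𝔽) (x : ∀ i, G i) (m : ℕ) (hm : m < k) :
    Fintype.card (G ⟨m, hm⟩) * Nat.card (Tset β lam x m)
      ≤ Fintype.card 𝔽 ^ r * Nat.card (Tset β lam x (m + 1)) := by
  classical
  set i₀ : Fin k := ⟨m, hm⟩ with hi₀
  have hsfin : (Tset β lam x (m+1)).Finite := Set.toFinite _
  have htfin : (Tset β lam x m).Finite := Set.toFinite _
  set s : Finset (∀ i, G i) := hsfin.toFinset with hs
  set t : Finset (∀ i, G i) := htfin.toFinset with ht
  -- the projection map
  have hmaps : ∀ y ∈ s, hyb x y m ∈ t := by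
    intro y hy
    rw [hs, Set.Finite.mem_toFinset] at hy
    rw [ht, Set.Finite.mem_toFinset]
    obtain ⟨h1, h2⟩ := hy
    constructor
    · intro i hi
      simp [hyb, Nat.not_lt.mpr hi]
    · intro j hj
      have : hyb x (hyb x y m) j = hyb x y j := by
        funext i
        simp only [hyb]
        by_cases hij : (i : ℕ) < j
        · simp [hij, hij.trans_le hj]
        · simp [hij]
      rw [this]
      exact h2 j (hj.trans (Nat.le_succ m))
  have hcard : s.card = ∑ z ∈ t, (s.filter fun y => hyb x y m = z).card :=
    Finset.card_eq_sum_card_fiberwise hmaps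
  -- fiber lower bound
  have hfiber : ∀ z ∈ t, Fintype.card (G i₀)
      ≤ Fintype.card 𝔽 ^ r * (s.filter fun y => hyb x y m = z).card := by
    intro z hz
    rw [ht, Set.Finite.mem_toFinset] at hz
    obtain ⟨hz1, hz2⟩ := hz
    have hzeq : hyb x z m = z := by
      funext i
      simp only [hyb]
      by_cases hi : (i : ℕ) < m
      · simp [hi]
      · simp [hi, hz1 i (Nat.not_lt.mp hi)]
    have hβz : β z = lam := by rw [← hzeq]; exact hz2 m le_rfl
    obtain ⟨g, h, hgh⟩ := hβ i₀ z
    have hzm : z i₀ = x i₀ := hz1 i₀ le_rfl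
    have hgx : g (x i₀) = lam - h := by
      have h' := hgh (x i₀)
      have hupd : Function.update z i₀ (x i₀) = z := by
        rw [← hzm]; exact Function.update_eq_self i₀ z
      rw [hupd, hβz] at h'
      exact (eq_sub_iff_add_eq).mpr h'.symm
    have key := affine_fiber_card g (lam - h) (x i₀) hgx
    refine key.trans (Nat.mul_le_mul_left _ ?_)
    -- inject the affine fiber into the graph fiber
    have : Nat.card {c : G i₀ // g c = lam - h}
        = (Finset.univ.filter fun c : G i₀ => g c = lam - h).card := by
      rw [Nat.card_eq_fintype_card, Fintype.card_subtype]
    rw [this]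
    apply Finset.card_le_card_of_injOn (fun c => Function.update z i₀ c)
    · intro c hc
      rw [Finset.mem_coe, Finset.mem_filter] at hc
      have hgc : g c = lam - h := hc.2
      rw [Finset.mem_coe, Finset.mem_filter]
      beta_reduce
      constructor
      · rw [hs, Set.Finite.mem_toFinset]
        constructor
        · intro i hi
          have hne : i ≠ i₀ := by
            rintro rfl; have hval : (i₀ : ℕ) = m := rfl; omega
          rw [Function.update_of_ne hne]
          exact hz1 i (le_of_lt hi)
        · intro j hj
          rcases Nat.lt_or_ge j (m+1) with hj' | hj'
          · have hjm : j ≤ m := Nat.lt_succ_iff.mp hj'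
            have : hyb x (Function.update z i₀ c) j = hyb x z j := by
              funext i
              simp only [hyb]
              by_cases hij : (i : ℕ) < j
              · have hne : i ≠ i₀ := by
                  rintro rfl; have hval : (i₀ : ℕ) = m := rfl; omega
                simp [hij, Function.update_of_ne hne]
              · simp [hij]
            rw [this]
            exact hz2 j hjm
          · have hjm : j = m + 1 := le_antisymm hj hj'
            subst hjm
            have : hyb x (Function.update z i₀ c) (m+1) = Function.update z i₀ c := by
              funext i
              simp only [hyb]
              by_cases hij : (i : ℕ) < m + 1
              · simp [hij]
              · have hne : i ≠ i₀ := by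
                  rintro rfl; have hval : (i₀ : ℕ) = m := rfl; omega
                simp [hij, Function.update_of_ne hne, hz1 i (by omega)]
            rw [this, hgh c, hgc]
            abel
      · funext i
        simp only [hyb]
        by_cases hij : (i : ℕ) < m
        · have hne : i ≠ i₀ := by
            rintro rfl; have hval : (i₀ : ℕ) = m := rfl; omega
          simp [hij, Function.update_of_ne hne]
        · simp [hij, hz1 i (Nat.not_lt.mp hij)]
    · intro c₁ _ c₂ _ hcc
      have := congrFun hcc i₀
      simpa using this
  -- put it together
  have h1 : Nat.card (Tset β lam x (m+1)) = s.card := by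
    rw [Nat.card_coe_set_eq, Set.ncard_eq_toFinset_card _ hsfin]
  have h2 : Nat.card (Tset β lam x m) = t.card := by
    rw [Nat.card_coe_set_eq, Set.ncard_eq_toFinset_card _ htfin]
  rw [h1, h2, hcard, Finset.mul_sum]
  calc Fintype.card (G ⟨m, hm⟩) * t.card = ∑ _z ∈ t, Fintype.card (G i₀) := by
        rw [Finset.sum_const, smul_eq_mul, mul_comm]
    _ ≤ ∑ z ∈ t, Fintype.card 𝔽 ^ r * (s.filter fun y => hyb x y m = z).card :=
        Finset.sum_le_sum hfiber

lemma total_count {k : ℕ} (𝔽 : Type) [Field 𝔽] [Fintype 𝔽]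
    (G : Fin k → Type) [∀ i, AddCommGroup (G i)] [∀ i, Module 𝔽 (G i)]
    [∀ i, Fintype (G i)]
    (r : ℕ) (β : (∀ i, G i) → (Fin r → 𝔽)) (hβ : IsMultiaffine 𝔽 β)
    (lam : Fin r → 𝔽) (x : ∀ i, G i) (hx : β x = lam) :
    ∀ m ≤ k, (∏ i : Fin k, if (i : ℕ) < m then Fintype.card (G i) else 1)
      ≤ Fintype.card 𝔽 ^ (m * r) * Nat.card (Tset β lam x m) := by
  intro m
  induction m with
  | zero =>
    intro _
    have hxT : x ∈ Tset β lam x 0 := by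
      refine ⟨fun i _ => rfl, fun j _ => ?_⟩
      have h0 : hyb x x j = x := by funext i; simp [hyb]
      rw [h0, hx]
    have hpos : 0 < Nat.card (Tset β lam x 0) :=
      Nat.card_pos_iff.mpr ⟨⟨⟨x, hxT⟩⟩, Set.toFinite _⟩
    simpa [Nat.one_le_iff_ne_zero, Nat.pos_iff_ne_zero] using hpos
  | succ m ih =>
    intro hm1
    have hm : m < k := hm1
    have hprod : (∏ i : Fin k, if (i : ℕ) < m + 1 then Fintype.card (G i) else 1)
        = (∏ i : Fin k, if (i : ℕ) < m then Fintype.card (G i) else 1)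
          * Fintype.card (G ⟨m, hm⟩) := by
      have hfac : ∀ i : Fin k, (if (i : ℕ) < m + 1 then Fintype.card (G i) else 1)
          = (if (i : ℕ) < m then Fintype.card (G i) else 1)
            * (if i = ⟨m, hm⟩ then Fintype.card (G i) else 1) := by
        intro i
        by_cases hi : i = ⟨m, hm⟩
        · subst hi; simp
        · have hvi : (i : ℕ) ≠ m := fun h => hi (Fin.ext h)
          by_cases h2 : (i : ℕ) < m
          · simp [h2, Nat.lt_succ_of_lt h2, hi]
          · have h3 : ¬ (i : ℕ) < m + 1 := by omega
            simp [h2, h3, hi]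
      rw [Finset.prod_congr rfl (fun i _ => hfac i), Finset.prod_mul_distrib,
        Finset.prod_ite_eq']
      simp
    calc (∏ i : Fin k, if (i : ℕ) < m + 1 then Fintype.card (G i) else 1)
        = (∏ i : Fin k, if (i : ℕ) < m then Fintype.card (G i) else 1)
          * Fintype.card (G ⟨m, hm⟩) := hprod
      _ ≤ (Fintype.card 𝔽 ^ (m * r) * Nat.card (Tset β lam x m))
          * Fintype.card (G ⟨m, hm⟩) :=
          Nat.mul_le_mul_right _ (ih (le_of_lt hm))
      _ = Fintype.card 𝔽 ^ (m * r)
          * (Fintype.card (G ⟨m, hm⟩) * Nat.card (Tset β lam x m)) := by ring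
      _ ≤ Fintype.card 𝔽 ^ (m * r)
          * (Fintype.card 𝔽 ^ r * Nat.card (Tset β lam x (m + 1))) :=
          Nat.mul_le_mul_left _ (step_count 𝔽 G r β hβ lam x m hm)
      _ = Fintype.card 𝔽 ^ ((m + 1) * r) * Nat.card (Tset β lam x (m + 1)) := by
          rw [Nat.succ_mul, pow_add]; ring

lemma tset_subset {k : ℕ} {𝔽 : Type} [Field 𝔽] {G : Fin k → Type} {r : ℕ}
    {β : (∀ i, G i) → (Fin r → 𝔽)} {lam : Fin r → 𝔽} {x : ∀ i, G i}
    {B : Set (∀ i, G i)} (hB : B = {x | β x = lam}) :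
    Tset β lam x k ⊆ B := by
  intro y hy
  have hyk : hyb x y k = y := funext fun i => if_pos i.isLt
  rw [hB]
  have := hy.2 k le_rfl
  rw [hyk] at this
  exact this

lemma reach_dist {k : ℕ} {𝔽 : Type} [Field 𝔽] {G : Fin k → Type} {r : ℕ}
    {β : (∀ i, G i) → (Fin r → 𝔽)} {lam : Fin r → 𝔽}
    {B : Set (∀ i, G i)} (hB : B = {x | β x = lam})
    (x : ∀ i, G i) (hx : x ∈ B) (y : ∀ i, G i) (hy : y ∈ Tset β lam x k)
    (hyB : y ∈ B) :
    ((hammingGraph G).induce B).edist ⟨x, hx⟩ ⟨y, hyB⟩ ≤ (k : ℕ∞) := by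
  have hmem : ∀ j, j ≤ k → hyb x y j ∈ B := by
    intro j hj; rw [hB]; exact hy.2 j hj
  have main : ∀ j, ∀ hj : j ≤ k,
      ((hammingGraph G).induce B).edist ⟨x, hx⟩ ⟨hyb x y j, hmem j hj⟩ ≤ (j : ℕ∞) := by
    intro j
    induction j with
    | zero =>
      intro hj
      have h0 : hyb x y 0 = x := by funext i; simp [hyb]
      have heq : (⟨hyb x y 0, hmem 0 hj⟩ : B) = ⟨x, hx⟩ := Subtype.ext h0
      rw [heq, SimpleGraph.edist_self]
      simp
    | succ j ihj =>
      intro hj1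
      have hj : j ≤ k := le_of_lt hj1
      have hstep : ((hammingGraph G).induce B).edist
          ⟨hyb x y j, hmem j hj⟩ ⟨hyb x y (j + 1), hmem (j + 1) hj1⟩ ≤ 1 := by
        by_cases heq : hyb x y j = hyb x y (j + 1)
        · have heq' : (⟨hyb x y j, hmem j hj⟩ : B)
              = ⟨hyb x y (j + 1), hmem (j + 1) hj1⟩ := Subtype.ext heq
          rw [heq', SimpleGraph.edist_self]
          exact zero_le_one
        · have hjk : j < k := hj1
          have hadj : ((hammingGraph G).induce B).Adj
              ⟨hyb x y j, hmem j hj⟩ ⟨hyb x y (j + 1), hmem (j + 1) hj1⟩ := by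
            show (hammingGraph G).Adj (hyb x y j) (hyb x y (j + 1))
            refine ⟨heq, ⟨⟨j, hjk⟩, ?_⟩⟩
            intro i hi
            have hvi : (i : ℕ) ≠ j := fun h => hi (Fin.ext h)
            simp only [hyb]
            by_cases h2 : (i : ℕ) < j
            · simp [h2, Nat.lt_succ_of_lt h2]
            · have h3 : ¬ (i : ℕ) < j + 1 := by omega
              simp [h2, h3]
          exact le_of_eq (SimpleGraph.edist_eq_one_iff_adj.mpr hadj)
      calc ((hammingGraph G).induce B).edist ⟨x, hx⟩ ⟨hyb x y (j + 1), hmem (j + 1) hj1⟩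
          ≤ ((hammingGraph G).induce B).edist ⟨x, hx⟩ ⟨hyb x y j, hmem j hj⟩
            + ((hammingGraph G).induce B).edist
              ⟨hyb x y j, hmem j hj⟩ ⟨hyb x y (j + 1), hmem (j + 1) hj1⟩ :=
            SimpleGraph.edist_triangle
        _ ≤ (j : ℕ∞) + 1 := add_le_add (ihj hj) hstep
        _ = ((j + 1 : ℕ) : ℕ∞) := by push_cast; ring
  have hyk : hyb x y k = y := funext fun i => if_pos i.isLt
  have hfin := main k le_rfl
  have heq : (⟨hyb x y k, hmem k le_rfl⟩ : B) = ⟨y, hyB⟩ := Subtype.ext hyk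
  rwa [heq] at hfin

/-- **Density of low-codimensional varieties.**
Let `B = {x : β x = lam}` be a variety of codimension `r` in `G 0 × ⋯ × G (k-1)`
(`β` multiaffine with values in `𝔽^r`) and let `x ∈ B`.  Then there are at least
`|𝔽|^{-kr} |G 0 × ⋯ × G (k-1)|` points of `B` at distance at most `k` from `x` in the
induced Hamming graph on `B`; in particular (`B` being nonempty)
`|B| ≥ |𝔽|^{-kr} |G 0 × ⋯ × G (k-1)|`. -/
theorem variety_density (k : ℕ) (hk : 0 < k)
    (𝔽 : Type) [Field 𝔽] [Fintype 𝔽]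
    (G : Fin k → Type) [∀ i, AddCommGroup (G i)] [∀ i, Module 𝔽 (G i)]
    [∀ i, Fintype (G i)] [∀ i, FiniteDimensional 𝔽 (G i)]
    (r : ℕ) (β : (∀ i, G i) → (Fin r → 𝔽)) (hβ : IsMultiaffine 𝔽 β)
    (lam : Fin r → 𝔽) (B : Set (∀ i, G i)) (hB : B = {x | β x = lam})
    (x : ∀ i, G i) (hx : x ∈ B) :
    ((Fintype.card 𝔽 : ℝ) ^ (k * r))⁻¹ * Fintype.card (∀ i, G i)
      ≤ (Nat.card {y : B | ((hammingGraph G).induce B).edist ⟨x, hx⟩ y ≤ (k : ℕ∞)} : ℝ) ∧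
    ((Fintype.card 𝔽 : ℝ) ^ (k * r))⁻¹ * Fintype.card (∀ i, G i)
      ≤ (Nat.card B : ℝ) := by
  have hxl : β x = lam := by rw [hB] at hx; exact hx
  have hcount := total_count 𝔽 G r β hβ lam x hxl k le_rfl
  have hprod : (∏ i : Fin k, if (i : ℕ) < k then Fintype.card (G i) else 1)
      = Fintype.card (∀ i, G i) := by
    rw [Fintype.card_pi]
    exact Finset.prod_congr rfl fun i _ => if_pos i.isLt
  rw [hprod] at hcount
  -- inclusion into B
  have hsub := tset_subset (x := x) hB
  have hcardB : Nat.card (Tset β lam x k) ≤ Nat.card B :=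
    Nat.card_mono (Set.toFinite _) hsub
  -- injection into the distance set
  set S : Set B := {y : B | ((hammingGraph G).induce B).edist ⟨x, hx⟩ y ≤ (k : ℕ∞)} with hS
  have hcardS : Nat.card (Tset β lam x k) ≤ Nat.card S := by
    have hinj : Function.Injective
        (fun y : Tset β lam x k => (⟨⟨y.1, hsub y.2⟩,
          reach_dist hB x hx y.1 y.2 (hsub y.2)⟩ : S)) := by
      intro a b hab
      apply Subtype.ext
      have := congrArg (fun z : S => (z.1 : ∀ i, G i)) hab
      exact this
    exact Nat.card_le_card_of_injective _ hinj
  have hq : (0 : ℝ) < (Fintype.card 𝔽 : ℝ) ^ (k * r) := by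
    positivity
  have key : ∀ N : ℕ, Nat.card (Tset β lam x k) ≤ N →
      ((Fintype.card 𝔽 : ℝ) ^ (k * r))⁻¹ * Fintype.card (∀ i, G i) ≤ (N : ℝ) := by
    intro N hN
    rw [inv_mul_le_iff₀ hq]
    have : Fintype.card (∀ i, G i) ≤ Fintype.card 𝔽 ^ (k * r) * N :=
      hcount.trans (Nat.mul_le_mul_left _ hN)
    exact_mod_cast this
  exact ⟨key _ hcardS, key _ hcardB⟩
end

section
/- Let A : G_1 × ⋯ × G_k → H be a multiaffine map into a finite-dimensional 𝔽-vector space H, and let s be a positive integer. Then there exists a multiaffine map φ : G_1 × ⋯ × G_k → 𝔽^s such that {x : A(x) = 0} ⊆ {x : φ(x) = 0} and |{x : φ(x) = 0} ∖ {x : A(x) = 0}| ≤ |𝔽|^{−s}·|G_1 × ⋯ × G_k|. Moreover, if A is linear in some coordinate c, then φ can be taken linear in coordinate c as well. -/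
/-- A map `f : G 0 × ⋯ × G (k-1) → H` is *linear in coordinate `c`* if fixing all
coordinates except the `c`-th yields a linear map `G c → H`. -/
def IsLinearInCoord (𝔽 : Type*) [Field 𝔽] {ι : Type*} [DecidableEq ι] {G : ι → Type*}
    [∀ i, AddCommGroup (G i)] [∀ i, Module 𝔽 (G i)]
    {H : Type*} [AddCommGroup H] [Module 𝔽 H] (c : ι) (f : (∀ i, G i) → H) : Prop :=
  ∀ x : ∀ i, G i, IsLinearMap 𝔽 (fun y : G c => f (Function.update x c y))

private lemma ker_card_lemma (𝔽 : Type) [Field 𝔽] [Fintype 𝔽]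
    (H : Type) [AddCommGroup H] [Module 𝔽 H] [FiniteDimensional 𝔽 H]
    (s : ℕ) (v : H) (hv : v ≠ 0) :
    Nat.card {L : H →ₗ[𝔽] (Fin s → 𝔽) // L v = 0} * (Fintype.card 𝔽)^s
      = Nat.card (H →ₗ[𝔽] (Fin s → 𝔽)) := by
  classical
  set ev : (H →ₗ[𝔽] (Fin s → 𝔽)) →ₗ[𝔽] (Fin s → 𝔽) := LinearMap.applyₗ v with hev
  have hsurj : Function.Surjective ev := by
    intro w
    have h1 : ¬ ∀ φ : Module.Dual 𝔽 H, φ v = 0 := by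
      rw [Module.forall_dual_apply_eq_zero_iff]; exact hv
    push_neg at h1
    obtain ⟨f, hf⟩ := h1
    refine ⟨(LinearMap.toSpanSingleton 𝔽 (Fin s → 𝔽) w).comp ((f v)⁻¹ • f), ?_⟩
    simp [hev, LinearMap.toSpanSingleton_apply, inv_mul_cancel₀ hf]
  have h1 := Submodule.card_eq_card_quotient_mul_card (LinearMap.ker ev)
  have h2 : Nat.card ((H →ₗ[𝔽] (Fin s → 𝔽)) ⧸ LinearMap.ker ev) = (Fintype.card 𝔽)^s := by
    have e := (LinearMap.quotKerEquivRange ev).trans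
      (LinearEquiv.ofTop _ (LinearMap.range_eq_top.mpr hsurj))
    rw [Nat.card_congr e.toEquiv]
    simp [Nat.card_eq_fintype_card]
  have h3 : Nat.card {L : H →ₗ[𝔽] (Fin s → 𝔽) // L v = 0} = Nat.card (LinearMap.ker ev) := by
    apply Nat.card_congr
    exact Equiv.subtypeEquivRight (fun L => by simp [LinearMap.mem_ker, hev])
  rw [h3, h1, h2]

open Finset in
private lemma avg_lemma (𝔽 : Type) [Field 𝔽] [Fintype 𝔽]
    (H : Type) [AddCommGroup H] [Module 𝔽 H] [FiniteDimensional 𝔽 H]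
    (X : Type) [Fintype X] [DecidableEq H] [DecidableEq 𝔽] (A : X → H) (s : ℕ) :
    ∃ L : H →ₗ[𝔽] (Fin s → 𝔽),
      (Finset.univ.filter fun x : X => A x ≠ 0 ∧ L (A x) = 0).card * (Fintype.card 𝔽)^s
        ≤ Fintype.card X := by
  classical
  haveI : Finite H := Module.finite_of_finite 𝔽
  haveI : Finite (H →ₗ[𝔽] (Fin s → 𝔽)) :=
    Finite.of_injective (fun L => (L : H → Fin s → 𝔽)) DFunLike.coe_injective
  haveI := Fintype.ofFinite (H →ₗ[𝔽] (Fin s → 𝔽))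
  by_contra hc
  push_neg at hc
  set N := Fintype.card (H →ₗ[𝔽] (Fin s → 𝔽)) with hN
  have key : ∑ L : H →ₗ[𝔽] (Fin s → 𝔽),
      (Finset.univ.filter fun x : X => A x ≠ 0 ∧ L (A x) = 0).card * (Fintype.card 𝔽)^s
      ≤ Fintype.card X * N := by
    have swap : ∀ L : H →ₗ[𝔽] (Fin s → 𝔽),
        (Finset.univ.filter fun x : X => A x ≠ 0 ∧ L (A x) = 0).card
        = ∑ x : X, if A x ≠ 0 ∧ L (A x) = 0 then 1 else 0 := by
      intro L; rw [Finset.card_filter]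
    calc ∑ L : H →ₗ[𝔽] (Fin s → 𝔽),
          (Finset.univ.filter fun x : X => A x ≠ 0 ∧ L (A x) = 0).card * (Fintype.card 𝔽)^s
        = ∑ x : X, (∑ L : H →ₗ[𝔽] (Fin s → 𝔽),
            if A x ≠ 0 ∧ L (A x) = 0 then 1 else 0) * (Fintype.card 𝔽)^s := by
          simp only [swap]
          rw [← Finset.sum_mul, ← Finset.sum_mul, Finset.sum_comm]
      _ ≤ ∑ _x : X, N := by
          apply Finset.sum_le_sum
          intro x _
          by_cases hx : A x = 0
          · simp [hx]
          · have h1 : (∑ L : H →ₗ[𝔽] (Fin s → 𝔽),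
                if A x ≠ 0 ∧ L (A x) = 0 then 1 else 0)
                = Nat.card {L : H →ₗ[𝔽] (Fin s → 𝔽) // L (A x) = 0} := by
              rw [Nat.card_eq_fintype_card, Fintype.card_subtype, Finset.card_filter]
              exact Finset.sum_congr rfl fun L _ => by simp [hx]
            rw [h1, ker_card_lemma 𝔽 H s (A x) hx, hN, Nat.card_eq_fintype_card]
      _ = Fintype.card X * N := by simp [mul_comm]
  have key2 : Fintype.card X * N <
      ∑ L : H →ₗ[𝔽] (Fin s → 𝔽),
        (Finset.univ.filter fun x : X => A x ≠ 0 ∧ L (A x) = 0).card * (Fintype.card 𝔽)^s := by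
    calc Fintype.card X * N = ∑ _L : H →ₗ[𝔽] (Fin s → 𝔽), Fintype.card X := by simp [mul_comm, hN]
      _ < _ := Finset.sum_lt_sum_of_nonempty Finset.univ_nonempty fun L _ => hc L
  exact absurd key (not_le.mpr key2)

/-- **Approximating dense varieties externally.**
Let `A : G 0 × ⋯ × G (k-1) → H` be multiaffine and let `s` be a positive integer.  Then
there is a multiaffine `φ : G 0 × ⋯ × G (k-1) → 𝔽^s` with `{A = 0} ⊆ {φ = 0}` and
`|{φ = 0} ∖ {A = 0}| ≤ |𝔽|^{-s} |G 0 × ⋯ × G (k-1)|`; moreover, if `A` is linear in some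
coordinate `c`, then `φ` is linear in coordinate `c` as well. -/
theorem external_approximation_of_varieties (k : ℕ)
    (𝔽 : Type) [Field 𝔽] [Fintype 𝔽]
    (G : Fin k → Type) [∀ i, AddCommGroup (G i)] [∀ i, Module 𝔽 (G i)]
    [∀ i, Fintype (G i)] [∀ i, FiniteDimensional 𝔽 (G i)]
    (H : Type) [AddCommGroup H] [Module 𝔽 H] [FiniteDimensional 𝔽 H]
    (A : (∀ i, G i) → H) (hA : IsMultiaffine 𝔽 A) (s : ℕ) (hs : 0 < s) :
    ∃ φ : (∀ i, G i) → (Fin s → 𝔽), IsMultiaffine 𝔽 φ ∧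
      {x : ∀ i, G i | A x = 0} ⊆ {x | φ x = 0} ∧
      (Nat.card ↥({x : ∀ i, G i | φ x = 0} \ {x | A x = 0}) : ℝ)
        ≤ ((Fintype.card 𝔽 : ℝ) ^ s)⁻¹ * Fintype.card (∀ i, G i) ∧
      ∀ c : Fin k, IsLinearInCoord 𝔽 c A → IsLinearInCoord 𝔽 c φ := by
  classical
  obtain ⟨L, hL⟩ := avg_lemma 𝔽 H (∀ i, G i) A s
  refine ⟨fun x => L (A x), ?_, ?_, ?_, ?_⟩
  · intro i x
    obtain ⟨g, h, hgh⟩ := hA i x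
    exact ⟨L.comp g, L h, fun y => by simp [hgh y]⟩
  · intro x hx
    simp only [Set.mem_setOf_eq] at hx ⊢
    rw [hx, map_zero]
  · have hset : {x : ∀ i, G i | L (A x) = 0} \ {x | A x = 0}
        = {x : ∀ i, G i | A x ≠ 0 ∧ L (A x) = 0} := by
      ext x; simp only [Set.mem_diff, Set.mem_setOf_eq]; tauto
    rw [hset]
    have hcard : Nat.card ↥{x : ∀ i, G i | A x ≠ 0 ∧ L (A x) = 0}
        = (Finset.univ.filter fun x : ∀ i, G i => A x ≠ 0 ∧ L (A x) = 0).card := by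
      rw [Nat.card_eq_fintype_card]
      exact Fintype.card_subtype _
    rw [hcard, inv_mul_eq_div, le_div_iff₀ (by positivity)]
    exact_mod_cast hL
  · intro c hAc x
    have h1 := hAc x
    constructor
    · intro a b; simp only []; rw [h1.map_add, map_add]
    · intro r a; simp only []; rw [h1.map_smul, map_smul]
end

section
/- Let G_1, …, G_k be finite abelian groups and, for each I ⊆ [k], let f_I : G_1 × ⋯ × G_k → ℂ be a function. Then |𝔼_{x, y ∈ G_1 × ⋯ × G_k} ∏_{I⊆[k]} Conj^{|I|} f_I(x_I, y_{[k]∖I})| ≤ ∏_{I⊆[k]} ‖f_I‖_{□^k}, where (x_I, y_{[k]∖I}) denotes the point whose i-th coordinate is x_i if i ∈ I and y_i otherwise. -/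
set_option linter.unusedSectionVars false
set_option maxHeartbeats 1000000
open Finset

lemma sum4 {α β M : Type*} [Fintype α] [Fintype β] [AddCommMonoid M] (g : α → β → α → β → M) :
    ∑ a : α, ∑ u : β, ∑ b : α, ∑ v : β, g a u b v
      = ∑ u : β, ∑ v : β, ∑ a : α, ∑ b : α, g a u b v := by
  rw [Finset.sum_comm]
  refine Finset.sum_congr rfl fun u _ => ?_
  have h : ∀ a : α, ∑ b : α, ∑ v : β, g a u b v = ∑ v : β, ∑ b : α, g a u b v :=
    fun a => Finset.sum_comm
  simp only [h]
  exact Finset.sum_comm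

namespace GowersCS

variable {k : ℕ}

/-- The unnormalized Gowers inner product of a family of functions. -/
noncomputable def S (G : Fin k → Type) [∀ i, Fintype (G i)]
    (f : Finset (Fin k) → ((∀ i, G i) → ℂ)) : ℂ :=
  ∑ x : ∀ i, G i, ∑ y : ∀ i, G i, ∏ I : Finset (Fin k),
    (fun z : ℂ => (starRingEnd ℂ) z)^[I.card]
      (f I (fun i => if i ∈ I then x i else y i))

variable (G : Fin k → Type) [∀ i, Fintype (G i)] (j : Fin k)

/-- Splitting off coordinate `j`. -/
def sp : (∀ i, G i) ≃ (G j × ∀ i : {i : Fin k // i ≠ j}, G i) := Equiv.piSplitAt j G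

lemma sp_symm_same (a : G j) (u : ∀ i : {i : Fin k // i ≠ j}, G i) :
    (sp G j).symm (a, u) j = a := by
  simp [sp, Equiv.piSplitAt]

lemma sp_symm_ne (a : G j) (u : ∀ i : {i : Fin k // i ≠ j}, G i) {i : Fin k} (h : i ≠ j) :
    (sp G j).symm (a, u) i = u ⟨i, h⟩ := by
  simp [sp, Equiv.piSplitAt, h]

lemma m_apply (I : Finset (Fin k)) (a b : G j) (u v : ∀ i : {i : Fin k // i ≠ j}, G i) :
    (fun i => if i ∈ I then (sp G j).symm (a, u) i else (sp G j).symm (b, v) i)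
      = (sp G j).symm ((if j ∈ I then a else b),
          fun i => if (i : Fin k) ∈ I then u i else v i) := by
  funext i
  by_cases hij : i = j
  · subst hij
    by_cases hI : i ∈ I <;> simp [hI, sp_symm_same]
  · by_cases hI : i ∈ I <;> simp [hI, sp_symm_ne _ _ _ _ hij]

variable (f : Finset (Fin k) → ((∀ i, G i) → ℂ))

/-- The part of the product over sets containing `j`. -/
noncomputable def P (a : G j) (u v : ∀ i : {i : Fin k // i ≠ j}, G i) : ℂ :=
  ∏ I ∈ Finset.univ.filter (fun I : Finset (Fin k) => j ∈ I),
    (fun z : ℂ => (starRingEnd ℂ) z)^[I.card]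
      (f I ((sp G j).symm (a, fun i => if (i : Fin k) ∈ I then u i else v i)))

/-- The part of the product over sets not containing `j`. -/
noncomputable def Q (b : G j) (u v : ∀ i : {i : Fin k // i ≠ j}, G i) : ℂ :=
  ∏ I ∈ Finset.univ.filter (fun I : Finset (Fin k) => j ∉ I),
    (fun z : ℂ => (starRingEnd ℂ) z)^[I.card]
      (f I ((sp G j).symm (b, fun i => if (i : Fin k) ∈ I then u i else v i)))

lemma S_decomp (g : Finset (Fin k) → ((∀ i, G i) → ℂ)) :
    S G g = ∑ u : ∀ i : {i : Fin k // i ≠ j}, G i, ∑ v : ∀ i : {i : Fin k // i ≠ j}, G i,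
      ∑ a : G j, ∑ b : G j,
      (∏ I ∈ Finset.univ.filter (fun I : Finset (Fin k) => j ∈ I),
        (fun z : ℂ => (starRingEnd ℂ) z)^[I.card]
          (g I (fun i => if i ∈ I then (sp G j).symm (a, u) i else (sp G j).symm (b, v) i))) *
      (∏ I ∈ Finset.univ.filter (fun I : Finset (Fin k) => j ∉ I),
        (fun z : ℂ => (starRingEnd ℂ) z)^[I.card]
          (g I (fun i => if i ∈ I then (sp G j).symm (a, u) i else (sp G j).symm (b, v) i))) := by
  have h1 : S G g = ∑ p : G j × (∀ i : {i : Fin k // i ≠ j}, G i),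
      ∑ q : G j × (∀ i : {i : Fin k // i ≠ j}, G i),
      ∏ I : Finset (Fin k), (fun z : ℂ => (starRingEnd ℂ) z)^[I.card]
        (g I (fun i => if i ∈ I then (sp G j).symm p i else (sp G j).symm q i)) := by
    unfold S
    refine Fintype.sum_equiv (sp G j) _ _ (fun x => ?_)
    refine Fintype.sum_equiv (sp G j) _ _ (fun y => ?_)
    simp
  rw [h1]
  rw [Fintype.sum_prod_type]
  have h2 : ∀ a : G j, ∀ u,
      (∑ q : G j × (∀ i : {i : Fin k // i ≠ j}, G i),
        ∏ I : Finset (Fin k), (fun z : ℂ => (starRingEnd ℂ) z)^[I.card]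
          (g I (fun i => if i ∈ I then (sp G j).symm (a, u) i else (sp G j).symm q i)))
      = ∑ b : G j, ∑ v, ∏ I : Finset (Fin k), (fun z : ℂ => (starRingEnd ℂ) z)^[I.card]
          (g I (fun i => if i ∈ I then (sp G j).symm (a, u) i else (sp G j).symm (b, v) i)) :=
    fun a u => Fintype.sum_prod_type _
  simp only [h2]
  rw [sum4]
  refine Finset.sum_congr rfl (fun u _ => Finset.sum_congr rfl (fun v _ =>
    Finset.sum_congr rfl (fun a _ => Finset.sum_congr rfl (fun b _ => ?_))))
  rw [← Finset.prod_filter_mul_prod_filter_not Finset.univ (fun I : Finset (Fin k) => j ∈ I)]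

set_option linter.unusedSectionVars false

lemma S_eq_PQ :
    S G f = ∑ u : ∀ i : {i : Fin k // i ≠ j}, G i, ∑ v : ∀ i : {i : Fin k // i ≠ j}, G i,
      (∑ a : G j, P G j f a u v) * (∑ b : G j, Q G j f b u v) := by
  rw [S_decomp G j f]
  refine Finset.sum_congr rfl fun u _ => Finset.sum_congr rfl fun v _ => ?_
  rw [Finset.sum_mul_sum]
  refine Finset.sum_congr rfl fun a _ => Finset.sum_congr rfl fun b _ => ?_
  congr 1
  · refine Finset.prod_congr rfl fun I hI => ?_
    simp only [Finset.mem_filter] at hI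
    rw [m_apply, if_pos hI.2]
  · refine Finset.prod_congr rfl fun I hI => ?_
    simp only [Finset.mem_filter] at hI
    rw [m_apply, if_neg hI.2]

lemma S_insert :
    S G (fun I => f (insert j I))
      = ∑ u : ∀ i : {i : Fin k // i ≠ j}, G i, ∑ v : ∀ i : {i : Fin k // i ≠ j}, G i,
        ((∑ a : G j, P G j f a u v) * (starRingEnd ℂ) (∑ b : G j, P G j f b u v)) := by
  rw [S_decomp G j (fun I => f (insert j I))]
  refine Finset.sum_congr rfl fun u _ => Finset.sum_congr rfl fun v _ => ?_
  rw [map_sum, Finset.sum_mul_sum]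
  refine Finset.sum_congr rfl fun a _ => Finset.sum_congr rfl fun b _ => ?_
  congr 1
  · refine Finset.prod_congr rfl fun I hI => ?_
    simp only [Finset.mem_filter] at hI
    rw [m_apply, if_pos hI.2, Finset.insert_eq_self.2 hI.2]
  · unfold P
    rw [map_prod]
    refine Finset.prod_nbij' (fun I => insert j I) (fun I => I.erase j)
      (fun I hI => ?_) (fun I hI => ?_) (fun I hI => ?_) (fun I hI => ?_) (fun I hI => ?_)
    · simp only [Finset.mem_filter, Finset.mem_univ, true_and] at hI ⊢
      exact Finset.mem_insert_self _ _
    · simp only [Finset.mem_filter, Finset.mem_univ, true_and] at hI ⊢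
      exact fun h => (Finset.mem_erase.1 h).1 rfl
    · simp only [Finset.mem_filter, Finset.mem_univ, true_and] at hI
      exact Finset.erase_insert hI
    · simp only [Finset.mem_filter, Finset.mem_univ, true_and] at hI
      exact Finset.insert_erase hI
    · simp only [Finset.mem_filter, Finset.mem_univ, true_and] at hI
      have hw : (fun i : {i : Fin k // i ≠ j} => if (i : Fin k) ∈ insert j I then u i else v i)
          = (fun i : {i : Fin k // i ≠ j} => if (i : Fin k) ∈ I then u i else v i) := by
        funext i
        simp [Finset.mem_insert, i.2]
      rw [m_apply, if_neg hI]
      rw [Finset.card_insert_of_notMem hI, hw, Function.iterate_succ_apply']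
      simp

lemma S_erase :
    S G (fun I => f (I.erase j))
      = ∑ u : ∀ i : {i : Fin k // i ≠ j}, G i, ∑ v : ∀ i : {i : Fin k // i ≠ j}, G i,
        ((starRingEnd ℂ) (∑ a : G j, Q G j f a u v) * (∑ b : G j, Q G j f b u v)) := by
  rw [S_decomp G j (fun I => f (I.erase j))]
  refine Finset.sum_congr rfl fun u _ => Finset.sum_congr rfl fun v _ => ?_
  rw [map_sum, Finset.sum_mul_sum]
  refine Finset.sum_congr rfl fun a _ => Finset.sum_congr rfl fun b _ => ?_
  congr 1
  · unfold Q
    rw [map_prod]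
    refine Finset.prod_nbij' (fun I => I.erase j) (fun I => insert j I)
      (fun I hI => ?_) (fun I hI => ?_) (fun I hI => ?_) (fun I hI => ?_) (fun I hI => ?_)
    · simp only [Finset.mem_filter, Finset.mem_univ, true_and] at hI ⊢
      exact fun h => (Finset.mem_erase.1 h).1 rfl
    · simp only [Finset.mem_filter, Finset.mem_univ, true_and] at hI ⊢
      exact Finset.mem_insert_self _ _
    · simp only [Finset.mem_filter, Finset.mem_univ, true_and] at hI
      exact Finset.insert_erase hI
    · simp only [Finset.mem_filter, Finset.mem_univ, true_and] at hI
      exact Finset.erase_insert hI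
    · simp only [Finset.mem_filter, Finset.mem_univ, true_and] at hI
      have hw : (fun i : {i : Fin k // i ≠ j} => if (i : Fin k) ∈ I.erase j then u i else v i)
          = (fun i : {i : Fin k // i ≠ j} => if (i : Fin k) ∈ I then u i else v i) := by
        funext i
        simp [Finset.mem_erase, i.2]
      rw [m_apply, if_pos hI, hw]
      have hc : I.card = (I.erase j).card + 1 := (Finset.card_erase_add_one hI).symm
      rw [hc, Function.iterate_succ_apply']
  · refine Finset.prod_congr rfl fun I hI => ?_
    simp only [Finset.mem_filter, Finset.mem_univ, true_and] at hI
    rw [m_apply, if_neg hI, Finset.erase_eq_of_notMem hI]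

lemma abs_S_insert :
    ‖S G (fun I => f (insert j I))‖
      = ∑ u : ∀ i : {i : Fin k // i ≠ j}, G i, ∑ v : ∀ i : {i : Fin k // i ≠ j}, G i,
          (‖∑ a : G j, P G j f a u v‖) ^ 2 := by
  rw [S_insert]
  simp only [Complex.mul_conj, Complex.sq_norm]
  push_cast [← Complex.ofReal_sum]
  rw [Complex.norm_real, Real.norm_eq_abs]
  exact abs_of_nonneg
    (Finset.sum_nonneg fun u _ => Finset.sum_nonneg fun v _ => Complex.normSq_nonneg _)

lemma abs_S_erase :
    ‖S G (fun I => f (I.erase j))‖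
      = ∑ u : ∀ i : {i : Fin k // i ≠ j}, G i, ∑ v : ∀ i : {i : Fin k // i ≠ j}, G i,
          (‖∑ b : G j, Q G j f b u v‖) ^ 2 := by
  rw [S_erase]
  have h : ∀ z : ℂ, (starRingEnd ℂ) z * z = (Complex.normSq z : ℂ) := fun z => by
    rw [mul_comm, Complex.mul_conj]
  simp only [h, Complex.sq_norm]
  push_cast [← Complex.ofReal_sum]
  rw [Complex.norm_real, Real.norm_eq_abs]
  exact abs_of_nonneg
    (Finset.sum_nonneg fun u _ => Finset.sum_nonneg fun v _ => Complex.normSq_nonneg _)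

lemma step :
    (‖S G f‖) ^ 2
      ≤ ‖S G (fun I => f (insert j I))‖
          * ‖S G (fun I => f (I.erase j))‖ := by
  have h1 : ‖S G f‖
      ≤ ∑ u : ∀ i : {i : Fin k // i ≠ j}, G i, ∑ v : ∀ i : {i : Fin k // i ≠ j}, G i,
          ‖∑ a : G j, P G j f a u v‖ * ‖∑ b : G j, Q G j f b u v‖ := by
    rw [S_eq_PQ G j f]
    refine le_trans (norm_sum_le _ _) (Finset.sum_le_sum fun u _ => ?_)
    refine le_trans (norm_sum_le _ _) (Finset.sum_le_sum fun v _ => ?_)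
    rw [norm_mul]
  have h2 := Finset.sum_mul_sq_le_sq_mul_sq Finset.univ
    (fun p : (∀ i : {i : Fin k // i ≠ j}, G i) × (∀ i : {i : Fin k // i ≠ j}, G i) =>
      ‖∑ a : G j, P G j f a p.1 p.2‖)
    (fun p => ‖∑ b : G j, Q G j f b p.1 p.2‖)
  rw [abs_S_insert, abs_S_erase]
  have e1 : ∑ u : ∀ i : {i : Fin k // i ≠ j}, G i, ∑ v : ∀ i : {i : Fin k // i ≠ j}, G i,
      ‖∑ a : G j, P G j f a u v‖ * ‖∑ b : G j, Q G j f b u v‖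
      = ∑ p : (∀ i : {i : Fin k // i ≠ j}, G i) × (∀ i : {i : Fin k // i ≠ j}, G i),
          ‖∑ a : G j, P G j f a p.1 p.2‖ * ‖∑ b : G j, Q G j f b p.1 p.2‖ :=
    by rw [Fintype.sum_prod_type]
  have e2 : ∑ u : ∀ i : {i : Fin k // i ≠ j}, G i, ∑ v : ∀ i : {i : Fin k // i ≠ j}, G i,
      (‖∑ a : G j, P G j f a u v‖) ^ 2
      = ∑ p : (∀ i : {i : Fin k // i ≠ j}, G i) × (∀ i : {i : Fin k // i ≠ j}, G i),
          (‖∑ a : G j, P G j f a p.1 p.2‖) ^ 2 :=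
    by rw [Fintype.sum_prod_type]
  have e3 : ∑ u : ∀ i : {i : Fin k // i ≠ j}, G i, ∑ v : ∀ i : {i : Fin k // i ≠ j}, G i,
      (‖∑ b : G j, Q G j f b u v‖) ^ 2
      = ∑ p : (∀ i : {i : Fin k // i ≠ j}, G i) × (∀ i : {i : Fin k // i ≠ j}, G i),
          (‖∑ b : G j, Q G j f b p.1 p.2‖) ^ 2 :=
    by rw [Fintype.sum_prod_type]
  rw [e2, e3]
  calc (‖S G f‖) ^ 2
      ≤ (∑ u : ∀ i : {i : Fin k // i ≠ j}, G i, ∑ v : ∀ i : {i : Fin k // i ≠ j}, G i,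
          ‖∑ a : G j, P G j f a u v‖ * ‖∑ b : G j, Q G j f b u v‖) ^ 2 := by
        refine pow_le_pow_left₀ (norm_nonneg _) h1 2
    _ = (∑ p : (∀ i : {i : Fin k // i ≠ j}, G i) × (∀ i : {i : Fin k // i ≠ j}, G i),
          ‖∑ a : G j, P G j f a p.1 p.2‖
            * ‖∑ b : G j, Q G j f b p.1 p.2‖) ^ 2 := by rw [e1]
    _ ≤ _ := h2

lemma main (f : Finset (Fin k) → ((∀ i, G i) → ℂ)) (T : Finset (Fin k)) :
    (‖S G f‖) ^ (2 ^ T.card)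
      ≤ ∏ J ∈ T.powerset, ‖S G (fun I => f ((I \ T) ∪ J))‖ := by
  induction T using Finset.induction_on with
  | empty => simp
  | @insert j T hj ih =>
    have hstep : ∀ J ∈ T.powerset,
        (‖S G (fun I => f ((I \ T) ∪ J))‖) ^ 2
          ≤ ‖S G (fun I => f ((I \ insert j T) ∪ insert j J))‖
              * ‖S G (fun I => f ((I \ insert j T) ∪ J))‖ := by
      intro J _
      have h := step G j (fun I => f ((I \ T) ∪ J))
      have e1 : (fun I : Finset (Fin k) => f ((insert j I \ T) ∪ J))
          = (fun I : Finset (Fin k) => f ((I \ insert j T) ∪ insert j J)) :=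
        funext fun I => congrArg f (by
          ext x
          by_cases hx : x = j <;> simp [hx, hj])
      have e2 : (fun I : Finset (Fin k) => f ((I.erase j \ T) ∪ J))
          = (fun I : Finset (Fin k) => f ((I \ insert j T) ∪ J)) :=
        funext fun I => congrArg f (by
          ext x
          by_cases hx : x = j <;> simp [hx])
      rw [e1, e2] at h
      exact h
    calc (‖S G f‖) ^ (2 ^ (insert j T).card)
        = ((‖S G f‖) ^ (2 ^ T.card)) ^ 2 := by
          rw [Finset.card_insert_of_notMem hj, pow_succ, pow_mul]
      _ ≤ (∏ J ∈ T.powerset, ‖S G (fun I => f ((I \ T) ∪ J))‖) ^ 2 :=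
          pow_le_pow_left₀ (pow_nonneg (norm_nonneg _) _) ih 2
      _ = ∏ J ∈ T.powerset, (‖S G (fun I => f ((I \ T) ∪ J))‖) ^ 2 := by
          rw [Finset.prod_pow]
      _ ≤ ∏ J ∈ T.powerset,
            (‖S G (fun I => f ((I \ insert j T) ∪ insert j J))‖
              * ‖S G (fun I => f ((I \ insert j T) ∪ J))‖) :=
          Finset.prod_le_prod (fun J _ => pow_nonneg (norm_nonneg _) _) hstep
      _ = (∏ J ∈ T.powerset,
            ‖S G (fun I => f ((I \ insert j T) ∪ insert j J))‖)
            * ∏ J ∈ T.powerset, ‖S G (fun I => f ((I \ insert j T) ∪ J))‖ :=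
          Finset.prod_mul_distrib
      _ = ∏ J ∈ (insert j T).powerset,
            ‖S G (fun I => f ((I \ insert j T) ∪ J))‖ := by
          rw [Finset.prod_powerset_insert hj, mul_comm]

lemma main_univ (f : Finset (Fin k) → ((∀ i, G i) → ℂ)) :
    (‖S G f‖) ^ (2 ^ k)
      ≤ ∏ J : Finset (Fin k), ‖S G (fun _ => f J)‖ := by
  have H := main G f Finset.univ
  rw [Finset.card_univ, Fintype.card_fin, Finset.powerset_univ] at H
  refine H.trans_eq (Finset.prod_congr rfl fun J _ => ?_)
  refine congrArg norm (congrArg (S G) ?_)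
  funext I
  refine congrArg f ?_
  rw [Finset.sdiff_eq_empty_iff_subset.2 (Finset.subset_univ I), Finset.empty_union]

end GowersCS


/-- The `2^k`-th power of the Gowers box norm of `f : G 0 × ⋯ × G (k-1) → ℂ`:
`𝔼_{x,y} ∏_{I ⊆ [k]} Conj^{|I|} f (x_I, y_{[k] ∖ I})`, where `(x_I, y_{[k] ∖ I})` is the
point whose `i`-th coordinate is `x i` if `i ∈ I` and `y i` otherwise. -/
noncomputable def boxAvg {k : ℕ} (G : Fin k → Type*) [∀ i, Fintype (G i)]
    (f : (∀ i, G i) → ℂ) : ℂ :=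
  (∑ x : ∀ i, G i, ∑ y : ∀ i, G i, ∏ I : Finset (Fin k),
      (fun z : ℂ => (starRingEnd ℂ) z)^[I.card]
        (f (fun i => if i ∈ I then x i else y i))) /
    ((Fintype.card (∀ i, G i) : ℂ) ^ 2)

/-- The Gowers box norm `‖f‖_{□^k}` of `f : G 0 × ⋯ × G (k-1) → ℂ`, the `2^k`-th root of
`boxAvg G f` (which is a nonnegative real number). -/
noncomputable def boxNorm {k : ℕ} (G : Fin k → Type*) [∀ i, Fintype (G i)]
    (f : (∀ i, G i) → ℂ) : ℝ :=
  (‖boxAvg G f‖) ^ ((1 : ℝ) / 2 ^ k)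

/-- **Gowers–Cauchy–Schwarz inequality for the box norm.**
For finite abelian groups `G 0, …, G (k-1)` and functions
`f I : G 0 × ⋯ × G (k-1) → ℂ` indexed by the subsets `I ⊆ [k]`,
`|𝔼_{x,y} ∏_{I ⊆ [k]} Conj^{|I|} (f I) (x_I, y_{[k] ∖ I})| ≤ ∏_{I ⊆ [k]} ‖f I‖_{□^k}`. -/
theorem gowers_cauchy_schwarz_box_norm (k : ℕ)
    (G : Fin k → Type) [∀ i, AddCommGroup (G i)] [∀ i, Fintype (G i)]
    (f : Finset (Fin k) → ((∀ i, G i) → ℂ)) :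
    ‖(∑ x : ∀ i, G i, ∑ y : ∀ i, G i, ∏ I : Finset (Fin k),
        (fun z : ℂ => (starRingEnd ℂ) z)^[I.card]
          (f I (fun i => if i ∈ I then x i else y i))) /
      ((Fintype.card (∀ i, G i) : ℂ) ^ 2)‖
      ≤ ∏ I : Finset (Fin k), boxNorm G (f I) := by
  have H := GowersCS.main_univ G f
  have hne : Nonempty (∀ i, G i) := ⟨fun i => 0⟩
  set N : ℝ := (Fintype.card (∀ i, G i) : ℝ) with hNdef
  have hN : 0 < N := by
    rw [hNdef]
    exact_mod_cast Fintype.card_pos (α := ∀ i, G i)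
  have habs : ∀ z : ℂ, ‖z / ((Fintype.card (∀ i, G i) : ℂ)) ^ 2‖
      = ‖z‖ / N ^ 2 := by
    intro z
    rw [norm_div, norm_pow, Complex.norm_natCast]
  set A : ℝ := ‖GowersCS.S G f‖ with hA
  set B : Finset (Fin k) → ℝ := fun J => ‖GowersCS.S G (fun _ => f J)‖ with hB
  have hcard : Fintype.card (Finset (Fin k)) = 2 ^ k := by
    rw [Fintype.card_finset, Fintype.card_fin]
  have h2k : (0 : ℝ) < 2 ^ k := by positivity
  have key : (A / N ^ 2) ^ (2 ^ k : ℕ) ≤ ∏ J : Finset (Fin k), (B J / N ^ 2) := by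
    rw [div_pow, Finset.prod_div_distrib, Finset.prod_const, Finset.card_univ, hcard,
      ← pow_mul]
    exact (div_le_div_iff_of_pos_right (by positivity)).2 H
  have hroot : A / N ^ 2 = ((A / N ^ 2) ^ (2 ^ k : ℕ)) ^ ((1 : ℝ) / 2 ^ k) := by
    rw [← Real.rpow_natCast (A / N ^ 2) (2 ^ k), ← Real.rpow_mul (by positivity)]
    push_cast
    rw [mul_one_div, div_self (ne_of_gt h2k), Real.rpow_one]
  have step2 : A / N ^ 2 ≤ (∏ J : Finset (Fin k), (B J / N ^ 2)) ^ ((1 : ℝ) / 2 ^ k) := by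
    rw [hroot]
    exact Real.rpow_le_rpow (by positivity) key (by positivity)
  have step3 : (∏ J : Finset (Fin k), (B J / N ^ 2)) ^ ((1 : ℝ) / 2 ^ k)
      = ∏ J : Finset (Fin k), (B J / N ^ 2) ^ ((1 : ℝ) / 2 ^ k) :=
    (Real.finset_prod_rpow _ _ (fun J _ => by positivity) _).symm
  have hnorm : ∀ J : Finset (Fin k), boxNorm G (f J) = (B J / N ^ 2) ^ ((1 : ℝ) / 2 ^ k) := by
    intro J
    unfold boxNorm
    congr 1
    have : boxAvg G (f J) = GowersCS.S G (fun _ => f J)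
        / ((Fintype.card (∀ i, G i) : ℂ)) ^ 2 := rfl
    rw [this, habs]
  calc ‖(GowersCS.S G f) / ((Fintype.card (∀ i, G i) : ℂ)) ^ 2‖
      = A / N ^ 2 := habs _
    _ ≤ ∏ J : Finset (Fin k), (B J / N ^ 2) ^ ((1 : ℝ) / 2 ^ k) := step2.trans_eq step3
    _ = ∏ J : Finset (Fin k), boxNorm G (f J) := by
        exact Finset.prod_congr rfl fun J _ => (hnorm J).symm
end

section
/- Let G be a finite-dimensional vector space over a finite field 𝔽 equipped with a nondegenerate symmetric bilinear form (dot product) ·. Let v_1, v_2, u_1, …, u_m ∈ G be such that neither v_1 nor v_2 lies in the span of {u_1, …, u_m}. Then there exists z ∈ G with v_1·z ≠ 0 and v_2·z ≠ 0, but u_i·z = 0 for all i ∈ [m]. -/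
/-!
Each `vⱼ` lies outside the span of the `uᵢ`, so the functional `B vⱼ` is not a combination of
the `B uᵢ` (as `B` is injective); hence it does not vanish on the common kernel `W` of the
`B uᵢ`. Two linear maps that are each nonzero somewhere on `W` are simultaneously nonzero at
some point of `W`: if `x` and `y` are witnesses that fail for the other map, `x + y` works.
-/

open Submodule LinearMap Set

theorem Submodule.exists_mem_apply_ne_zero_and_apply_ne_zero {R M N : Type*} [Semiring R]
    [AddCommMonoid M] [AddCommMonoid N] [Module R M] [Module R N] (p : Submodule R M)
    {f g : M →ₗ[R] N} (hf : ∃ x ∈ p, f x ≠ 0) (hg : ∃ y ∈ p, g y ≠ 0) :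
    ∃ z ∈ p, f z ≠ 0 ∧ g z ≠ 0 := by
  obtain ⟨x, hxp, hfx⟩ := hf
  obtain ⟨y, hyp, hgy⟩ := hg
  by_cases hgx : g x = 0
  · by_cases hfy : f y = 0
    · exact ⟨x + y, p.add_mem hxp hyp, by simpa [hfy], by simpa [hgx]⟩
    · exact ⟨y, hyp, hfy, hgy⟩
  · exact ⟨x, hxp, hfx, hgx⟩

theorem exists_mem_iInf_ker_apply_ne_zero {ι 𝕜 E F : Type*} [Finite ι] [Field 𝕜]
    [AddCommGroup E] [Module 𝕜 E] [AddCommGroup F] [Module 𝕜 F]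
    {B : E →ₗ[𝕜] F →ₗ[𝕜] 𝕜} (hB : Function.Injective B) {u : ι → E} {v : E}
    (hv : v ∉ span 𝕜 (range u)) : ∃ z ∈ ⨅ i, ker (B (u i)), B v z ≠ 0 := by
  by_contra! h
  have hBv : B v ∈ span 𝕜 (range (B ∘ u)) := mem_span_of_iInf_ker_le_ker h
  rw [range_comp, ← Submodule.map_span] at hBv
  obtain ⟨w, hw, hwv⟩ := hBv
  exact hv (hB hwv ▸ hw)

theorem exists_common_nonvanishing_in_orthogonal_general
    (𝔽 : Type) [Field 𝔽]
    (G : Type) [AddCommGroup G] [Module 𝔽 G]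
    (B : G →ₗ[𝔽] G →ₗ[𝔽] 𝔽)
    (hnd : ∀ x : G, (∀ y : G, B x y = 0) → x = 0)
    (m : ℕ) (v₁ v₂ : G) (u : Fin m → G)
    (h₁ : v₁ ∉ Submodule.span 𝔽 (Set.range u))
    (h₂ : v₂ ∉ Submodule.span 𝔽 (Set.range u)) :
    ∃ z : G, B v₁ z ≠ 0 ∧ B v₂ z ≠ 0 ∧ ∀ i, B (u i) z = 0 := by
  have hB : Function.Injective B :=
    ker_eq_bot.mp <| ker_eq_bot'.mpr fun x hx ↦ hnd x fun y ↦ by simp [hx]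
  obtain ⟨z, hz, hz₁, hz₂⟩ := (⨅ i, ker (B (u i))).exists_mem_apply_ne_zero_and_apply_ne_zero
    (exists_mem_iInf_ker_apply_ne_zero hB h₁) (exists_mem_iInf_ker_apply_ne_zero hB h₂)
  exact ⟨z, hz₁, hz₂, fun i ↦ (mem_iInf _).mp hz i⟩

/-- **Simultaneous nonvanishing on the orthogonal complement.**
Let `G` be a finite-dimensional vector space over a finite field `𝔽` with a dot product
(a nondegenerate symmetric bilinear form) `B`.  If `v₁, v₂ ∈ G` both lie outside the span
of `u 0, …, u (m-1) ∈ G`, then there is `z ∈ G` with `B v₁ z ≠ 0` and `B v₂ z ≠ 0` but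
`B (u i) z = 0` for all `i`. -/
theorem exists_common_nonvanishing_in_orthogonal
    (𝔽 : Type) [Field 𝔽] [Fintype 𝔽]
    (G : Type) [AddCommGroup G] [Module 𝔽 G] [FiniteDimensional 𝔽 G]
    (B : G →ₗ[𝔽] G →ₗ[𝔽] 𝔽)
    (hsymm : ∀ x y : G, B x y = B y x)
    (hnd : ∀ x : G, (∀ y : G, B x y = 0) → x = 0)
    (m : ℕ) (v₁ v₂ : G) (u : Fin m → G)
    (h₁ : v₁ ∉ Submodule.span 𝔽 (Set.range u))
    (h₂ : v₂ ∉ Submodule.span 𝔽 (Set.range u)) :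
    ∃ z : G, B v₁ z ≠ 0 ∧ B v₂ z ≠ 0 ∧ ∀ i, B (u i) z = 0 :=
  exists_common_nonvanishing_in_orthogonal_general 𝔽 G B hnd m v₁ v₂ u h₁ h₂
end

section
/- Let A : G_1 × ⋯ × G_k → H be a multilinear map into a finite-dimensional 𝔽-vector space H, and let D be a nonempty variety of codimension r in G_1 × ⋯ × G_k with D ⊆ {x : A(x) = 0}. Then there exist R ≤ 2^{2k}·r, nonempty sets I_1, …, I_R ⊆ [k], and multilinear forms β_i : ∏_{j∈I_i} G_j → 𝔽 for i ∈ [R], such that {x ∈ G_1 × ⋯ × G_k : β_i(x_{I_i}) = 0 for all i ∈ [R]} ⊆ {x : A(x) = 0}. -/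
set_option maxHeartbeats 1000000

open Finset

section MobiusAux

variable {F : Type*} [Field F] {ι : Type*} [DecidableEq ι]

private lemma aux_sign_sum (s U : Finset ι) (hU : U ⊆ s) :
    ∑ T ∈ s.powerset.filter (fun T => U ⊆ T), (-1 : F) ^ (T.card + U.card)
      = if U = s then 1 else 0 := by
  have h1 : ∑ T ∈ s.powerset.filter (fun T => U ⊆ T), (-1 : F) ^ (T.card + U.card)
      = ∑ V ∈ (s \ U).powerset, (-1 : F) ^ V.card := by
    refine Finset.sum_nbij' (fun T => T \ U) (fun V => V ∪ U) ?_ ?_ ?_ ?_ ?_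
    · intro T hT
      simp only [mem_filter, mem_powerset] at hT
      exact mem_powerset.2 (sdiff_subset_sdiff hT.1 le_rfl)
    · intro V hV
      simp only [mem_powerset] at hV
      refine mem_filter.2 ⟨mem_powerset.2 (union_subset (hV.trans (sdiff_subset)) hU), subset_union_right⟩
    · intro T hT
      simp only [mem_filter, mem_powerset] at hT
      exact sdiff_union_of_subset hT.2
    · intro V hV
      simp only [mem_powerset] at hV
      have hd : Disjoint V U := disjoint_of_subset_left hV sdiff_disjoint
      show (V ∪ U) \ U = V
      rw [union_sdiff_right, sdiff_eq_self_of_disjoint hd]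
    · intro T hT
      simp only [mem_filter, mem_powerset] at hT
      have hle : U.card ≤ T.card := card_le_card hT.2
      have hc : T.card = (T \ U).card + U.card := by
        rw [card_sdiff_of_subset hT.2]; omega
      show (-1 : F) ^ (T.card + U.card) = (-1 : F) ^ (T \ U).card
      rw [hc, show (T \ U).card + U.card + U.card = (T \ U).card + 2 * U.card by ring,
        pow_add, pow_mul]
      norm_num
  rw [h1]
  have h2 : ((∑ V ∈ (s \ U).powerset, (-1 : ℤ) ^ V.card : ℤ) : F)
      = ∑ V ∈ (s \ U).powerset, (-1 : F) ^ V.card := by push_cast; rfl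
  rw [← h2, Finset.sum_powerset_neg_one_pow_card]
  have h3 : s \ U = ∅ ↔ U = s := by
    rw [sdiff_eq_empty_iff_subset]
    exact ⟨fun h => le_antisymm hU h, fun h => h ▸ le_rfl⟩
  by_cases h : U = s <;> simp [h3, h]

private lemma aux_swap {M : Type*} [AddCommGroup M] [Module F M]
    (s : Finset ι) (c : Finset ι → Finset ι → F) (f : Finset ι → M) :
    ∑ T ∈ s.powerset, ∑ U ∈ T.powerset, c T U • f U
      = ∑ U ∈ s.powerset, (∑ T ∈ s.powerset.filter (fun T => U ⊆ T), c T U) • f U := by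
  have h1 : ∀ T ∈ s.powerset, ∑ U ∈ T.powerset, c T U • f U
      = ∑ U ∈ s.powerset, if U ⊆ T then c T U • f U else 0 := by
    intro T hT
    have hTs := mem_powerset.1 hT
    rw [← Finset.sum_filter]
    congr 1
    ext U
    simp only [mem_filter, mem_powerset]
    exact ⟨fun h => ⟨h.trans hTs, h⟩, fun h => h.2⟩
  rw [Finset.sum_congr rfl h1, Finset.sum_comm]
  refine Finset.sum_congr rfl fun U hU => ?_
  rw [Finset.sum_smul, Finset.sum_filter]

private lemma aux_mob1 {M : Type*} [AddCommGroup M] [Module F M]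
    (s : Finset ι) (f : Finset ι → M) :
    ∑ T ∈ s.powerset, ∑ U ∈ T.powerset, ((-1 : F) ^ (T.card + U.card)) • f U = f s := by
  rw [aux_swap]
  have h1 : ∀ U ∈ s.powerset,
      (∑ T ∈ s.powerset.filter (fun T => U ⊆ T), (-1 : F) ^ (T.card + U.card)) • f U
        = if U = s then f U else 0 := by
    intro U hU
    rw [aux_sign_sum s U (mem_powerset.1 hU)]
    by_cases h : U = s <;> simp [h]
  rw [Finset.sum_congr rfl h1, Finset.sum_ite_eq' s.powerset s f]
  simp

private lemma aux_mob2 {M : Type*} [AddCommGroup M] [Module F M]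
    (s : Finset ι) (f : Finset ι → M) :
    ∑ W ∈ s.powerset, ((-1 : F) ^ (s.card + W.card)) • (∑ U ∈ W.powerset, f U) = f s := by
  have h0 : ∀ W : Finset ι, ((-1 : F) ^ (s.card + W.card)) • (∑ U ∈ W.powerset, f U)
      = ∑ U ∈ W.powerset, ((-1 : F) ^ (s.card + W.card)) • f U := by
    intro W; rw [Finset.smul_sum]
  simp_rw [h0]
  rw [aux_swap s (fun T _ => (-1 : F) ^ (s.card + T.card)) f]
  have h1 : ∀ U ∈ s.powerset,
      (∑ T ∈ s.powerset.filter (fun T => U ⊆ T), (-1 : F) ^ (s.card + T.card)) • f U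
        = if U = s then f U else 0 := by
    intro U hU
    have hUs := mem_powerset.1 hU
    have h2 : ∑ T ∈ s.powerset.filter (fun T => U ⊆ T), (-1 : F) ^ (s.card + T.card)
        = (-1 : F) ^ (s.card + U.card) *
          ∑ T ∈ s.powerset.filter (fun T => U ⊆ T), (-1 : F) ^ (T.card + U.card) := by
      rw [Finset.mul_sum]
      refine Finset.sum_congr rfl fun T hT => ?_
      rw [← pow_add, show s.card + U.card + (T.card + U.card) = s.card + T.card + 2 * U.card by ring,
        pow_add (-1 : F) (s.card + T.card), pow_mul]
      norm_num
    rw [h2, aux_sign_sum s U hUs]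
    by_cases h : U = s
    · subst h
      rw [if_pos rfl, if_pos rfl, mul_one, show U.card + U.card = 2 * U.card by ring, pow_mul]
      norm_num
    · simp [h]
  rw [Finset.sum_congr rfl h1, Finset.sum_ite_eq' s.powerset s f]
  simp

end MobiusAux

section GeoAux

variable {k r : ℕ} {𝔽 : Type} [Field 𝔽] {G : Fin k → Type}
  [∀ i, AddCommGroup (G i)] [∀ i, Module 𝔽 (G i)]

/-- `a` shifted by `z` on coordinates in `U`. -/
private def pfun (a z : ∀ i, G i) (U : Finset (Fin k)) : ∀ i, G i :=
  fun i => if i ∈ U then a i + z i else a i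

/-- extension of a partial tuple by zero -/
private def extT (T : Finset (Fin k)) (y : ∀ j : ↥T, G j.1) : ∀ i, G i :=
  fun i => if h : i ∈ T then y ⟨i, h⟩ else 0

private def Gam (β : (∀ i, G i) → (Fin r → 𝔽)) (a : ∀ i, G i) (T : Finset (Fin k))
    (z : ∀ i, G i) : Fin r → 𝔽 :=
  ∑ U ∈ T.powerset, (-1 : 𝔽) ^ (T.card + U.card) • β (pfun a z U)

private lemma pfun_congr {a z z' : ∀ i, G i} {U : Finset (Fin k)}
    (h : ∀ m ∈ U, z m = z' m) : pfun a z U = pfun a z' U := by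
  funext i
  by_cases hi : i ∈ U
  · simp only [pfun, if_pos hi, h i hi]
  · simp [pfun, hi]

private lemma Gam_congr {β : (∀ i, G i) → (Fin r → 𝔽)} {a z z' : ∀ i, G i}
    {T : Finset (Fin k)} (h : ∀ m ∈ T, z m = z' m) : Gam β a T z = Gam β a T z' := by
  unfold Gam
  refine Finset.sum_congr rfl fun U hU => ?_
  rw [pfun_congr fun m hm => h m (mem_powerset.1 hU hm)]

private lemma extT_update (T : Finset (Fin k)) [inst : DecidableEq ↥T]
    (y : ∀ j : ↥T, G j.1) (j : ↥T) (v : G j.1) :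
    extT T (Function.update y j v) = Function.update (extT T y) j.1 v := by
  funext i
  rcases eq_or_ne i (j : Fin k) with rfl | hij
  · have hiT : (j : Fin k) ∈ T := j.2
    simp [extT, hiT, Subtype.coe_eta]
  · rw [Function.update_of_ne hij]
    by_cases hiT : i ∈ T
    · have : (⟨i, hiT⟩ : ↥T) ≠ j := fun h => hij (by rw [← h])
      simp [extT, hiT, Function.update_of_ne this]
    · simp [extT, hiT]

private lemma Gam_linear {β : (∀ i, G i) → (Fin r → 𝔽)} (hβ : IsMultiaffine 𝔽 β)
    (a : ∀ i, G i) (T : Finset (Fin k)) {i : Fin k} (hi : i ∈ T) (z : ∀ i, G i) :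
    ∃ g : G i →ₗ[𝔽] (Fin r → 𝔽), ∀ v, Gam β a T (Function.update z i v) = g v := by
  classical
  choose g h hg using fun U : Finset (Fin k) => hβ i (pfun a z U)
  refine ⟨∑ U ∈ (T.erase i).powerset, (-((-1 : 𝔽) ^ (T.card + U.card))) • g U, fun v => ?_⟩
  have hsplit : ∀ f : Finset (Fin k) → (Fin r → 𝔽),
      ∑ U ∈ T.powerset, f U = ∑ U ∈ (T.erase i).powerset, (f U + f (insert i U)) := by
    intro f
    conv_lhs => rw [← Finset.insert_erase hi]
    rw [Finset.sum_powerset_insert (Finset.notMem_erase i T), Finset.sum_add_distrib]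
  unfold Gam
  rw [hsplit]
  have key : ∀ U ∈ (T.erase i).powerset,
      ((-1 : 𝔽) ^ (T.card + U.card) • β (pfun a (Function.update z i v) U)
        + (-1 : 𝔽) ^ (T.card + (insert i U).card) • β (pfun a (Function.update z i v) (insert i U)))
      = (-((-1 : 𝔽) ^ (T.card + U.card))) • g U v := by
    intro U hU
    have hiU : i ∉ U := fun h => Finset.notMem_erase i T (mem_powerset.1 hU h)
    have e1 : pfun a (Function.update z i v) U = pfun a z U :=
      pfun_congr fun m hm => Function.update_of_ne (fun h : m = i => hiU (h ▸ hm)) _ _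
    have e2 : pfun a (Function.update z i v) (insert i U)
        = Function.update (pfun a z U) i (a i + v) := by
      funext m
      rcases eq_or_ne m i with rfl | hmi
      · simp [pfun]
      · rw [Function.update_of_ne hmi]
        simp [pfun, hmi, Function.update_of_ne hmi, Finset.mem_insert]
    have e3 : β (pfun a z U) = g U (a i) + h U := by
      have : pfun a z U = Function.update (pfun a z U) i (a i) := by
        have : pfun a z U i = a i := by simp [pfun, hiU]
        rw [← this, Function.update_eq_self]
      rw [this, hg U]
    have e4 : β (Function.update (pfun a z U) i (a i + v)) = (g U (a i) + g U v) + h U := by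
      rw [hg U, map_add]
    have hsgn : (-1 : 𝔽) ^ (T.card + (insert i U).card) = -((-1 : 𝔽) ^ (T.card + U.card)) := by
      rw [Finset.card_insert_of_notMem hiU, show T.card + (U.card + 1) = (T.card + U.card) + 1 by ring,
        pow_succ]
      ring
    rw [e1, e2, e3, e4, hsgn]
    simp only [smul_add, neg_smul]
    abel
  rw [Finset.sum_congr rfl key]
  simp only [LinearMap.coe_sum, Finset.sum_apply, LinearMap.smul_apply]

end GeoAux

/-- **Multilinearization of varieties inside the kernel of a multilinear map.**
Let `A : G 0 × ⋯ × G (k-1) → H` be multilinear and let `D = {x : β x = lam}` be a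
nonempty variety of codimension `r` (`β` multiaffine with values in `𝔽^r`) with
`D ⊆ {A = 0}`.  Then there are `R ≤ 2^{2k} r`, nonempty sets `I i ⊆ [k]` and multilinear
forms `βs i : ∏_{j ∈ I i} G j → 𝔽` for `i < R`, such that every `x` with
`βs i (x_{I i}) = 0` for all `i` satisfies `A x = 0`. -/
theorem multilinear_variety_in_kernel (k : ℕ)
    (𝔽 : Type) [Field 𝔽] [Fintype 𝔽]
    (G : Fin k → Type) [∀ i, AddCommGroup (G i)] [∀ i, Module 𝔽 (G i)]
    [∀ i, Fintype (G i)] [∀ i, FiniteDimensional 𝔽 (G i)]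
    (H : Type) [AddCommGroup H] [Module 𝔽 H] [FiniteDimensional 𝔽 H]
    (A : MultilinearMap 𝔽 G H) (r : ℕ)
    (β : (∀ i, G i) → (Fin r → 𝔽)) (hβ : IsMultiaffine 𝔽 β) (lam : Fin r → 𝔽)
    (hne : ({x : ∀ i, G i | β x = lam}).Nonempty)
    (hsub : {x : ∀ i, G i | β x = lam} ⊆ {x | A x = 0}) :
    ∃ R : ℕ, R ≤ 2 ^ (2 * k) * r ∧
      ∃ (I : Fin R → Finset (Fin k))
        (βs : ∀ i, MultilinearMap 𝔽 (fun j : ↥(I i) => G j.1) 𝔽),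
        (∀ i, (I i).Nonempty) ∧
        {x : ∀ i, G i | ∀ i, βs i (fun j => x j.1) = 0} ⊆ {x | A x = 0} := by
  classical
  obtain ⟨a, ha⟩ := hne
  have ha' : β a = lam := ha
  -- construct the multilinear forms
  have mkB : ∀ (T : Finset (Fin k)) (c : Fin r),
      ∃ B : MultilinearMap 𝔽 (fun j : ↥T => G j.1) 𝔽,
        ∀ y, B y = Gam β a T (extT T y) c := by
    intro T c
    refine ⟨{ toFun := fun y => Gam β a T (extT T y) c
              map_update_add' := ?_
              map_update_smul' := ?_ }, fun y => rfl⟩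
    · intro dec y j v w
      obtain ⟨g, hg⟩ := Gam_linear hβ a T j.2 (extT T y)
      simp only [extT_update, hg, map_add, Pi.add_apply]
    · intro dec y j cc v
      obtain ⟨g, hg⟩ := Gam_linear hβ a T j.2 (extT T y)
      simp only [extT_update, hg, map_smul, Pi.smul_apply]
  choose B hB using mkB
  set S : Finset (Finset (Fin k) × Fin r) :=
    (Finset.univ.filter fun T : Finset (Fin k) => T.Nonempty) ×ˢ Finset.univ with hS
  refine ⟨S.card, ?_, fun m => (S.equivFin.symm m).1.1,
    fun m => B (S.equivFin.symm m).1.1 (S.equivFin.symm m).1.2, ?_, ?_⟩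
  · have h1 : S.card = (Finset.univ.filter fun T : Finset (Fin k) => T.Nonempty).card * r := by
      rw [hS, Finset.card_product, Finset.card_univ, Fintype.card_fin]
    have h2 : (Finset.univ.filter fun T : Finset (Fin k) => T.Nonempty).card ≤ 2 ^ k := by
      calc (Finset.univ.filter fun T : Finset (Fin k) => T.Nonempty).card
          ≤ (Finset.univ : Finset (Finset (Fin k))).card := Finset.card_filter_le _ _
        _ = 2 ^ k := by rw [Finset.card_univ, Fintype.card_finset, Fintype.card_fin]
    calc S.card ≤ 2 ^ k * r := by rw [h1]; exact Nat.mul_le_mul_right r h2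
      _ ≤ 2 ^ (2 * k) * r :=
          Nat.mul_le_mul_right r (Nat.pow_le_pow_right (by norm_num) (by omega))
  · intro m
    have hm : (S.equivFin.symm m).1 ∈
        (Finset.univ.filter fun T : Finset (Fin k) => T.Nonempty) ×ˢ
          (Finset.univ : Finset (Fin r)) := (S.equivFin.symm m).2
    exact (Finset.mem_filter.1 (Finset.mem_product.1 hm).1).2
  · intro x hx
    simp only [Set.mem_setOf_eq] at hx ⊢
    have hGam : ∀ T : Finset (Fin k), T.Nonempty → Gam β a T x = 0 := by
      intro T hT
      funext c
      have hmem : (T, c) ∈ S :=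
        Finset.mem_product.2
          ⟨Finset.mem_filter.2 ⟨Finset.mem_univ _, hT⟩, Finset.mem_univ _⟩
      have h0 := (show ∀ p : S, B p.1.1 p.1.2 (fun j => x j.1) = 0 from fun p => by
        obtain ⟨m, rfl⟩ := S.equivFin.symm.surjective p; exact hx m) ⟨(T, c), hmem⟩
      have hq : S.equivFin.symm (S.equivFin ⟨(T, c), hmem⟩) = ⟨(T, c), hmem⟩ :=
        Equiv.symm_apply_apply _ _
      dsimp only at h0; rw [hB] at h0
      have hagree : ∀ m ∈ T, extT T (fun j : ↥T => x j.1) m = x m := by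
        intro m hm; simp [extT, hm]
      show Gam β a T x c = 0
      exact (congrFun (Gam_congr hagree) c).symm.trans h0
    have hvar : ∀ W : Finset (Fin k), A (pfun a x W) = 0 := by
      intro W
      refine hsub ?_
      show β (pfun a x W) = lam
      have hm := aux_mob1 (F := 𝔽) W (fun U => β (pfun a x U))
      rw [← hm]
      have hterm : ∀ T ∈ W.powerset,
          (∑ U ∈ T.powerset, ((-1 : 𝔽) ^ (T.card + U.card)) • β (pfun a x U))
            = if T = ∅ then lam else 0 := by
        intro T _
        by_cases hT : T = ∅
        · subst hT
          have hpe : pfun a x ∅ = a := by funext i; simp [pfun]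
          simp [hpe, ha']
        · rw [if_neg hT]
          have := hGam T (Finset.nonempty_iff_ne_empty.2 hT)
          simpa [Gam] using this
      rw [Finset.sum_congr rfl hterm, Finset.sum_ite_eq' W.powerset ∅ (fun _ => lam)]
      simp
    have hpw : ∀ W : Finset (Fin k),
        (∑ U ∈ W.powerset, A (U.piecewise x a)) = A (pfun a x W) := by
      intro W
      rw [← A.map_piecewise_add x a W]
      congr 1
      funext mm
      by_cases hmW : mm ∈ W <;> simp [pfun, Finset.piecewise, hmW, add_comm]
    have hfin := aux_mob2 (F := 𝔽) (Finset.univ : Finset (Fin k))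
      (fun U => A (U.piecewise x a))
    rw [show A x = A (Finset.univ.piecewise x a) from by rw [Finset.piecewise_univ], ← hfin]
    refine Finset.sum_eq_zero fun W _ => ?_
    rw [hpw W, hvar W, smul_zero]
end
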